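/- arXiv:0901.2186 — 2 statements merged into one kernel-verified Lean document; each statement's English description precedes it below -/
import Mathlib

section
/- An irrational number x ∈ [0,1] is a quadratic irrational (a root of a quadratic polynomial with integer coefficients) if and only if its continued fraction expansion is eventually periodic, i.e. there exist k ≥ 1 and N ≥ 0 such that a_{n+k}(x) = a_n(x) for all n > N. -/
/-- The Gauss map `τ(x) = 1/x - ⌊1/x⌋`. -/
noncomputable def gaussMap (x : ℝ) : ℝ := Int.fract (1 / x)

/-- The `n`-th partial quotient (indexed from `0`) of the continued fraction
expansion of `x`: `a_{n+1}(x) = ⌊1/τⁿ(x)⌋`. -/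
noncomputable def pq (x : ℝ) (n : ℕ) : ℤ := ⌊1 / (gaussMap^[n] x)⌋

/-!
Write `uₙ = τⁿ x` for the Gauss map `τ`. The matrix `Mₙ = [[P, Q], [R, S]]`, the product of the
`[[0, 1], [1, aᵢ]]` over the first `n` partial quotients, has determinant `±1` and satisfies
`x = (P uₙ + Q) / (R uₙ + S)`.

If `f(X, Y) = A X² + B XY + C Y²` vanishes at `(x, 1)`, then `uₙ` is a root of `f ∘ Mₙ`, a form with
the same discriminant whose outer coefficients `f(P, R)` and `f(Q, S)` stay bounded because
`|P - x R| = 1 / (R uₙ + S)`. Only finitely many numbers are roots of such bounded forms, so the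
orbit of `x` under `τ` is eventually periodic, and so are the partial quotients.

Conversely, two numbers with the same partial quotients differ by at most `1 / S²`, with `S → ∞`,
so they are equal. An eventually periodic expansion therefore makes some `uₙ` a periodic point of
`τ`, i.e. a fixed point `u = Mₖ · u`, which is a root of a quadratic; and being a root of an
integer quadratic passes back from `τ u = 1/u - ⌊1/u⌋` to `u`.
-/

open Function

def unitIrrationals : Set ℝ := {x | x ∈ Set.Ioo 0 1 ∧ Irrational x}

theorem irrational_gaussMap {x : ℝ} (hx : Irrational x) : Irrational (gaussMap x) := by
  rw [gaussMap, ← Int.self_sub_floor, one_div]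
  exact hx.inv.sub_intCast _

theorem mapsTo_gaussMap : Set.MapsTo gaussMap unitIrrationals unitIrrationals := by
  rintro x ⟨-, hx⟩
  have hτ := irrational_gaussMap hx
  exact ⟨⟨(Int.fract_nonneg _).lt_of_ne hτ.ne_zero.symm, Int.fract_lt_one _⟩, hτ⟩

theorem gaussMap_iterate_mem {x : ℝ} (hx : x ∈ unitIrrationals) (n : ℕ) :
    gaussMap^[n] x ∈ unitIrrationals :=
  mapsTo_gaussMap.iterate n hx

theorem irrational_gaussMap_iterate {x : ℝ} (hx : Irrational x) (n : ℕ) :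
    Irrational (gaussMap^[n] x) := by
  induction n with
  | zero => exact hx
  | succ n ih => rw [iterate_succ_apply']; exact irrational_gaussMap ih

theorem mul_floor_add_gaussMap {x : ℝ} (hx : x ≠ 0) : x * (⌊1 / x⌋ + gaussMap x) = 1 := by
  rw [gaussMap, Int.floor_add_fract]
  field_simp

theorem mul_floor_add_gaussMap_iterate {x : ℝ} (hx : Irrational x) (n : ℕ) :
    gaussMap^[n] x * (pq x n + gaussMap^[n + 1] x) = 1 := by
  rw [iterate_succ_apply']
  exact mul_floor_add_gaussMap (irrational_gaussMap_iterate hx n).ne_zero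

theorem pq_iterate (x : ℝ) (j n : ℕ) : pq (gaussMap^[j] x) n = pq x (n + j) := by
  rw [pq, pq, iterate_add_apply]

theorem one_le_pq {x : ℝ} (hx : x ∈ unitIrrationals) (n : ℕ) : 1 ≤ pq x n := by
  obtain ⟨⟨h0, h1⟩, -⟩ := gaussMap_iterate_mem hx n
  exact Int.le_floor.mpr (by simpa using one_le_one_div h0 h1.le)

/-- `cfMatrix a n = [[p, p'], [q, q']]`, where `p' / q'` is the convergent `[0; a 0, …, a (n-1)]`
and `p / q` the previous one. -/
def cfMatrix (a : ℕ → ℤ) : ℕ → Matrix (Fin 2) (Fin 2) ℤ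
  | 0 => 1
  | n + 1 => cfMatrix a n * !![0, 1; 1, a n]

section cfMatrix

variable (a : ℕ → ℤ) (n : ℕ)

theorem cfMatrix_succ_eq : cfMatrix a (n + 1) =
    !![cfMatrix a n 0 1, cfMatrix a n 0 0 + a n * cfMatrix a n 0 1;
      cfMatrix a n 1 1, cfMatrix a n 1 0 + a n * cfMatrix a n 1 1] := by
  rw [cfMatrix, Matrix.eta_fin_two (cfMatrix a n), Matrix.mul_fin_two]
  simp [mul_comm]

theorem det_cfMatrix : (cfMatrix a n).det = (-1) ^ n := by
  induction n with
  | zero => simp [cfMatrix]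
  | succ n ih => simp [cfMatrix, ih, pow_succ]

theorem abs_det_cfMatrix :
    |cfMatrix a n 0 0 * cfMatrix a n 1 1 - cfMatrix a n 0 1 * cfMatrix a n 1 0| = 1 := by
  rw [← Matrix.det_fin_two, det_cfMatrix, abs_pow, abs_neg, abs_one, one_pow]

end cfMatrix

theorem cfMatrix_bottom_row_bounds {a : ℕ → ℤ} (ha : ∀ i, 1 ≤ a i) (n : ℕ) :
    0 ≤ cfMatrix a n 1 0 ∧ cfMatrix a n 1 0 ≤ cfMatrix a n 1 1 ∧ 1 ≤ cfMatrix a n 1 1 ∧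
      (n : ℤ) ≤ cfMatrix a n 1 0 + cfMatrix a n 1 1 := by
  induction n with
  | zero => simp [cfMatrix]
  | succ n ih =>
    obtain ⟨h0, h1, h2, h3⟩ := ih
    have := ha n
    simp only [cfMatrix_succ_eq, Matrix.of_apply, Matrix.cons_val_zero, Matrix.cons_val_one]
    push_cast
    refine ⟨by omega, by nlinarith, by nlinarith, by nlinarith⟩

theorem mul_cfMatrix_eq {x : ℝ} (hx : Irrational x) (n : ℕ) :
    x * (cfMatrix (pq x) n 1 0 * gaussMap^[n] x + cfMatrix (pq x) n 1 1) =
      cfMatrix (pq x) n 0 0 * gaussMap^[n] x + cfMatrix (pq x) n 0 1 := by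
  induction n with
  | zero => simp [cfMatrix]
  | succ n ih =>
    have h := mul_floor_add_gaussMap_iterate hx n
    simp only [cfMatrix_succ_eq, Matrix.of_apply, Matrix.cons_val_zero, Matrix.cons_val_one]
    push_cast
    linear_combination (pq x n + gaussMap^[n + 1] x) * ih
      + (cfMatrix (pq x) n 0 0 - x * cfMatrix (pq x) n 1 0 : ℝ) * h

theorem abs_sub_mul_sq_le_of_moebius {p q r s y z u v : ℝ} (hy : y * (r * u + s) = p * u + q)
    (hz : z * (r * v + s) = p * v + q) (hdet : |p * s - q * r| = 1) (hr : 0 ≤ r) (hs : 0 ≤ s)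
    (hu : u ∈ Set.Icc 0 1) (hv : v ∈ Set.Icc 0 1) : |y - z| * s ^ 2 ≤ 1 := by
  have hdu : s ≤ r * u + s := le_add_of_nonneg_left (mul_nonneg hr hu.1)
  have hdv : s ≤ r * v + s := le_add_of_nonneg_left (mul_nonneg hr hv.1)
  have hd : 0 ≤ (r * u + s) * (r * v + s) := mul_nonneg (hs.trans hdu) (hs.trans hdv)
  have hmoeb : (y - z) * ((r * u + s) * (r * v + s)) = (p * s - q * r) * (u - v) := by
    linear_combination (r * v + s) * hy - (r * u + s) * hz
  calc |y - z| * s ^ 2 ≤ |y - z| * ((r * u + s) * (r * v + s)) := by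
        rw [sq]; gcongr; exact hs.trans hdu
    _ = |u - v| := by
        rw [← abs_of_nonneg hd, ← abs_mul, hmoeb, abs_mul, hdet, one_mul]
    _ ≤ 1 := abs_sub_le_iff.mpr ⟨by linarith [hu.2, hv.1], by linarith [hu.1, hv.2]⟩

theorem eq_of_pq_eq {y z : ℝ} (hy : y ∈ unitIrrationals) (hz : z ∈ unitIrrationals)
    (h : pq y = pq z) : y = z := by
  have key : ∀ n : ℕ, |y - z| * n ≤ 2 := by
    intro n
    obtain ⟨hR, hRS, hS, hn⟩ := cfMatrix_bottom_row_bounds (one_le_pq hy) n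
    obtain ⟨⟨hu0, hu1⟩, -⟩ := gaussMap_iterate_mem hy n
    obtain ⟨⟨hv0, hv1⟩, -⟩ := gaussMap_iterate_mem hz n
    have hyz := abs_sub_mul_sq_le_of_moebius (mul_cfMatrix_eq hy.2 n)
      (h ▸ mul_cfMatrix_eq hz.2 n) (by exact_mod_cast abs_det_cfMatrix (pq y) n)
      (by exact_mod_cast hR) (by exact_mod_cast (hR.trans hRS)) ⟨hu0.le, hu1.le⟩ ⟨hv0.le, hv1.le⟩
    have hS' : (1 : ℝ) ≤ cfMatrix (pq y) n 1 1 := by exact_mod_cast hS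
    have hn' : (n : ℝ) ≤ 2 * cfMatrix (pq y) n 1 1 := by
      exact_mod_cast (by omega : (n : ℤ) ≤ 2 * cfMatrix (pq y) n 1 1)
    have hyz0 := abs_nonneg (y - z)
    nlinarith [mul_le_mul_of_nonneg_left hn' hyz0]
  by_contra hne
  have hpos : 0 < |y - z| := abs_pos.mpr (sub_ne_zero.mpr hne)
  obtain ⟨n, hn⟩ := exists_nat_gt (2 / |y - z|)
  have := key n
  rw [div_lt_iff₀ hpos] at hn
  linarith

/-- Degenerate equations (`a = 0`) are allowed so that the notion is stable under `x ↦ x + m` and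
`x ↦ x⁻¹`. -/
def IsQuadraticRoot (x : ℝ) : Prop :=
  ∃ a b c : ℤ, (a, b, c) ≠ 0 ∧ a * x ^ 2 + b * x + c = 0

theorem Irrational.discrim_ne_zero {x : ℝ} (hx : Irrational x) {a b c : ℤ} (h0 : (a, b, c) ≠ 0)
    (hq : a * x ^ 2 + b * x + c = 0) : discrim a b c ≠ 0 := by
  intro hD
  have hlin : ((2 * a : ℤ) : ℝ) * x + b = 0 := by
    have hD' : discrim (a : ℝ) b c = 0 := by unfold discrim at hD ⊢; exact_mod_cast hD
    rw [discrim_eq_sq_of_quadratic_eq_zero (x := x) (by linear_combination hq)] at hD'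
    exact_mod_cast pow_eq_zero_iff two_ne_zero |>.mp hD'
  by_cases ha : a = 0
  · subst ha
    have hb : b = 0 := by simpa using hlin
    subst hb
    simp_all
  · exact ((hx.intCast_mul (by omega)).add_intCast b).ne_zero hlin

theorem Irrational.isQuadraticRoot_iff {x : ℝ} (hx : Irrational x) :
    IsQuadraticRoot x ↔ ∃ a b c : ℤ, a ≠ 0 ∧ a * x ^ 2 + b * x + c = 0 := by
  constructor
  · rintro ⟨a, b, c, h0, hq⟩
    refine ⟨a, b, c, fun ha => ?_, hq⟩
    subst ha
    have hb : b = 0 := by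
      by_contra hb
      exact ((hx.intCast_mul hb).add_intCast c).ne_zero (by simpa using hq)
    subst hb
    simp_all
  · rintro ⟨a, b, c, ha, hq⟩
    exact ⟨a, b, c, by simp [ha], hq⟩

theorem IsQuadraticRoot.add_intCast {x : ℝ} (h : IsQuadraticRoot x) (m : ℤ) :
    IsQuadraticRoot (x + m) := by
  obtain ⟨a, b, c, h0, hq⟩ := h
  refine ⟨a, b - 2 * a * m, a * m ^ 2 - b * m + c, fun h => h0 ?_, ?_⟩
  · simp only [Prod.mk_eq_zero] at h ⊢
    obtain ⟨ha, hb, hc⟩ := h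
    subst ha
    simp_all
  · push_cast
    linear_combination hq

theorem IsQuadraticRoot.inv {x : ℝ} (h : IsQuadraticRoot x) : IsQuadraticRoot x⁻¹ := by
  rcases eq_or_ne x 0 with rfl | hx
  · exact ⟨0, 1, 0, by simp, by simp⟩
  obtain ⟨a, b, c, h0, hq⟩ := h
  refine ⟨c, b, a, fun h => h0 ?_, ?_⟩
  · simp only [Prod.mk_eq_zero] at h ⊢
    tauto
  · field_simp
    linear_combination hq

theorem IsQuadraticRoot.of_gaussMap {x : ℝ} (h : IsQuadraticRoot (gaussMap x)) :
    IsQuadraticRoot x := by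
  have h' : IsQuadraticRoot (1 / x) := by
    simpa [gaussMap, Int.fract_add_floor] using h.add_intCast ⌊1 / x⌋
  simpa using h'.inv

theorem IsQuadraticRoot.of_gaussMap_iterate {x : ℝ} {n : ℕ}
    (h : IsQuadraticRoot (gaussMap^[n] x)) : IsQuadraticRoot x := by
  induction n generalizing x with
  | zero => exact h
  | succ n ih => exact (ih (by rwa [iterate_succ_apply] at h)).of_gaussMap

def quadraticRootsOfHeightLE (L : ℤ) : Set ℝ :=
  {u | ∃ a b c : ℤ, (a, b, c) ≠ 0 ∧ |a| ≤ L ∧ |b| ≤ L ∧ |c| ≤ L ∧ a * u ^ 2 + b * u + c = 0}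

open Polynomial in
theorem finite_quadraticRootsOfHeightLE (L : ℤ) : (quadraticRootsOfHeightLE L).Finite := by
  let box : Set (ℤ × ℤ × ℤ) :=
    (Set.Icc (-L) L ×ˢ Set.Icc (-L) L ×ˢ Set.Icc (-L) L) \ {0}
  let poly (t : ℤ × ℤ × ℤ) : ℝ[X] := C (t.1 : ℝ) * X ^ 2 + C (t.2.1 : ℝ) * X + C (t.2.2 : ℝ)
  have hbox : box.Finite :=
    ((Set.finite_Icc _ _).prod ((Set.finite_Icc _ _).prod (Set.finite_Icc _ _))).sdiff
  have hpoly : ∀ t ∈ box, poly t ≠ 0 := by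
    rintro ⟨a, b, c⟩ ht hp
    have h2 := congrArg (coeff · 2) hp
    have h1 := congrArg (coeff · 1) hp
    have h0 := congrArg (coeff · 0) hp
    simp only [poly, coeff_add, coeff_C_mul, coeff_X_pow, coeff_X, coeff_C] at h0 h1 h2
    norm_num at h0 h1 h2
    simp [box, h0, h1, h2] at ht
  refine (hbox.biUnion fun t ht => finite_setOfPred_isRoot (hpoly t ht)).subset ?_
  rintro u ⟨a, b, c, h0, ha, hb, hc, hu⟩
  simp only [Set.mem_iUnion]
  exact ⟨(a, b, c), ⟨⟨abs_le.mp ha, abs_le.mp hb, abs_le.mp hc⟩, h0⟩, by simpa [poly] using hu⟩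

theorem quadratic_moebius_eq_zero {R : Type*} [CommRing R] {A B C p q r s x u : R}
    (hq : A * x ^ 2 + B * x + C = 0) (hx : x * (r * u + s) = p * u + q) :
    (A * p ^ 2 + B * p * r + C * r ^ 2) * u ^ 2
      + (2 * A * p * q + B * (p * s + q * r) + 2 * C * r * s) * u
      + (A * q ^ 2 + B * q * s + C * s ^ 2) = 0 := by
  linear_combination (r * u + s) ^ 2 * hq
    - (A * (x * (r * u + s) + p * u + q) + B * (r * u + s)) * hx

theorem discrim_quadratic_moebius {R : Type*} [CommRing R] (A B C p q r s : R) :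
    discrim (A * p ^ 2 + B * p * r + C * r ^ 2)
        (2 * A * p * q + B * (p * s + q * r) + 2 * C * r * s) (A * q ^ 2 + B * q * s + C * s ^ 2)
      = (p * s - q * r) ^ 2 * discrim A B C := by
  unfold discrim; ring

theorem abs_quadForm_le {A B C x p r d : ℝ} (hq : A * x ^ 2 + B * x + C = 0) (hx0 : 0 ≤ x)
    (hx1 : x ≤ 1) (hr : 0 ≤ r) (hd : 1 ≤ d) (hrd : r ≤ d) (hpd : |p - x * r| * d ≤ 1) :
    |A * p ^ 2 + B * p * r + C * r ^ 2| ≤ 3 * |A| + |B| := by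
  set e := p - x * r
  -- `(x r, r)` is a zero of the form, so `p - x r` factors out, and it is small.
  have hfac : A * p ^ 2 + B * p * r + C * r ^ 2 = e * (A * e + (2 * A * x + B) * r) := by
    linear_combination r ^ 2 * hq
  have he : |e| ≤ 1 := le_trans (le_mul_of_one_le_right (abs_nonneg e) hd) hpd
  have hAx : |2 * A * x + B| ≤ 2 * |A| + |B| := by
    calc |2 * A * x + B| ≤ 2 * |A| * x + |B| := by
          simpa [abs_mul, abs_of_nonneg hx0] using abs_add_le (2 * A * x) B
      _ ≤ 2 * |A| + |B| := by nlinarith [abs_nonneg A]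
  refine le_of_mul_le_mul_right ?_ (by linarith : 0 < d)
  calc |A * p ^ 2 + B * p * r + C * r ^ 2| * d
      = |e| * d * |A * e + (2 * A * x + B) * r| := by rw [hfac, abs_mul]; ring
    _ ≤ |A * e + (2 * A * x + B) * r| :=
        mul_le_of_le_one_left (abs_nonneg _) hpd
    _ ≤ |A| * |e| + |2 * A * x + B| * r := by
        simpa [abs_mul, abs_of_nonneg hr] using abs_add_le (A * e) ((2 * A * x + B) * r)
    _ ≤ |A| * 1 + (2 * |A| + |B|) * r := by gcongr
    _ ≤ (3 * |A| + |B|) * d := by nlinarith [abs_nonneg A, abs_nonneg B]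

theorem abs_quadForm_cfMatrix_le {x : ℝ} (hx : x ∈ unitIrrationals) {A B C : ℤ}
    (hq : (A : ℝ) * x ^ 2 + B * x + C = 0) (n : ℕ) :
    |A * cfMatrix (pq x) n 0 0 ^ 2 + B * cfMatrix (pq x) n 0 0 * cfMatrix (pq x) n 1 0
      + C * cfMatrix (pq x) n 1 0 ^ 2| ≤ 3 * |A| + |B| := by
  obtain ⟨hR, hRS, hS, -⟩ := cfMatrix_bottom_row_bounds (one_le_pq hx) n
  obtain ⟨⟨hu0, hu1⟩, -⟩ := gaussMap_iterate_mem hx n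
  have hxM := mul_cfMatrix_eq hx.2 n
  have hdet : |(cfMatrix (pq x) n 0 0 * cfMatrix (pq x) n 1 1
      - cfMatrix (pq x) n 0 1 * cfMatrix (pq x) n 1 0 : ℝ)| = 1 := by
    exact_mod_cast abs_det_cfMatrix (pq x) n
  set M := cfMatrix (pq x) n
  set u := gaussMap^[n] x
  have hR' : (0 : ℝ) ≤ M 1 0 := by exact_mod_cast hR
  have hRS' : (M 1 0 : ℝ) ≤ M 1 1 := by exact_mod_cast hRS
  have hS' : (1 : ℝ) ≤ M 1 1 := by exact_mod_cast hS
  have hRu : 0 ≤ (M 1 0 : ℝ) * u := mul_nonneg hR' hu0.le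
  have h := abs_quadForm_le hq hx.1.1.le hx.1.2.le hR' (by linarith) (by linarith)
    (p := M 0 0) (d := M 1 0 * u + M 1 1) <| by
      rw [← abs_of_pos (by linarith : (0 : ℝ) < M 1 0 * u + M 1 1), ← abs_mul, ← hdet]
      exact le_of_eq (congrArg _ (by linear_combination (-(M 1 0 : ℝ)) * hxM))
  exact_mod_cast h

theorem gaussMap_iterate_mem_quadraticRootsOfHeightLE {x : ℝ} (hx : x ∈ unitIrrationals)
    {A B C : ℤ} (h0 : (A, B, C) ≠ 0) (hq : (A : ℝ) * x ^ 2 + B * x + C = 0) (n : ℕ) :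
    gaussMap^[n] x ∈ quadraticRootsOfHeightLE (|discrim A B C| + 4 * (3 * |A| + |B|) ^ 2) := by
  have hF := abs_quadForm_cfMatrix_le hx hq n
  have hG := abs_quadForm_cfMatrix_le hx hq (n + 1)
  simp only [cfMatrix_succ_eq, Matrix.of_apply, Matrix.cons_val_zero, Matrix.cons_val_one] at hG
  have heq := quadratic_moebius_eq_zero hq (mul_cfMatrix_eq hx.2 n)
  have hdet := abs_det_cfMatrix (pq x) n
  set M := cfMatrix (pq x) n
  have hdisc := discrim_quadratic_moebius A B C (M 0 0) (M 0 1) (M 1 0) (M 1 1)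
  rw [← sq_abs (M 0 0 * M 1 1 - M 0 1 * M 1 0), hdet, one_pow, one_mul] at hdisc
  set F := A * M 0 0 ^ 2 + B * M 0 0 * M 1 0 + C * M 1 0 ^ 2
  set G := A * M 0 1 ^ 2 + B * M 0 1 * M 1 1 + C * M 1 1 ^ 2
  set H := 2 * A * M 0 0 * M 0 1 + B * (M 0 0 * M 1 1 + M 0 1 * M 1 0) + 2 * C * M 1 0 * M 1 1
  set K := 3 * |A| + |B|
  -- `F` and `G` are bounded directly, `H` through the invariant discriminant `H² - 4 F G`.
  have hD : discrim A B C ≠ 0 := hx.2.discrim_ne_zero h0 hq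
  have hK : K ≤ |discrim A B C| + 4 * K ^ 2 := by
    nlinarith [Int.le_self_sq K, abs_nonneg (discrim A B C)]
  have hFG : |F * G| ≤ K ^ 2 := by
    rw [abs_mul, sq]; exact mul_le_mul hF hG (abs_nonneg _) (hF.trans' (abs_nonneg _))
  have hH : |H| ≤ |discrim A B C| + 4 * K ^ 2 := by
    have hH2 : H ^ 2 = discrim A B C + 4 * (F * G) := by
      rw [← hdisc]; unfold discrim; ring
    have := Int.natAbs_le_self_sq H
    rw [Int.natCast_natAbs] at this
    linarith [le_abs_self (discrim A B C), le_abs_self (F * G)]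
  refine ⟨F, H, G, fun h => hD ?_, hF.trans hK, hH, hG.trans hK, ?_⟩
  · simp only [Prod.mk_eq_zero] at h
    rw [← hdisc, h.1, h.2.1, h.2.2]
    simp [discrim]
  · push_cast [F, G, H]
    linear_combination heq

theorem exists_isPeriodicPt_of_isQuadraticRoot {x : ℝ} (hx : x ∈ unitIrrationals)
    (h : IsQuadraticRoot x) : ∃ m k, 0 < k ∧ IsPeriodicPt gaussMap k (gaussMap^[m] x) := by
  obtain ⟨A, B, C, h0, hq⟩ := h
  obtain ⟨i, j, hij, hEq⟩ := (finite_quadraticRootsOfHeightLE _).exists_lt_map_eq_of_forall_mem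
    (gaussMap_iterate_mem_quadraticRootsOfHeightLE hx h0 hq)
  refine ⟨i, j - i, by omega, ?_⟩
  rw [IsPeriodicPt, IsFixedPt, ← iterate_add_apply, Nat.sub_add_cancel hij.le, hEq]

theorem pq_add_eq_of_isPeriodicPt {x : ℝ} {m k n : ℕ}
    (h : IsPeriodicPt gaussMap k (gaussMap^[m] x)) (hn : m ≤ n) : pq x (n + k) = pq x n := by
  obtain ⟨j, rfl⟩ := Nat.exists_eq_add_of_le hn
  have := congrArg (pq · j) h.eq
  simp only [pq_iterate, ← iterate_add_apply] at this
  rwa [add_comm k, ← add_assoc, add_comm j m] at this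

theorem isPeriodicPt_of_pq_add_eq {x : ℝ} (hx : x ∈ unitIrrationals) {k N : ℕ}
    (h : ∀ n, N < n → pq x (n + k) = pq x n) : IsPeriodicPt gaussMap k (gaussMap^[N + 1] x) := by
  refine eq_of_pq_eq (gaussMap_iterate_mem (gaussMap_iterate_mem hx _) k)
    (gaussMap_iterate_mem hx _) (funext fun m => ?_)
  rw [pq_iterate, pq_iterate, pq_iterate, add_right_comm]
  exact h _ (by omega)

theorem isQuadraticRoot_of_isPeriodicPt {y : ℝ} (hy : y ∈ unitIrrationals) {k : ℕ} (hk : 0 < k)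
    (h : IsPeriodicPt gaussMap k y) : IsQuadraticRoot y := by
  obtain ⟨j, rfl⟩ := Nat.exists_eq_add_one_of_ne_zero hk.ne'
  have e := mul_cfMatrix_eq hy.2 (j + 1)
  rw [h.eq] at e
  have hR : 1 ≤ cfMatrix (pq y) (j + 1) 1 0 := by
    simpa [cfMatrix_succ_eq] using (cfMatrix_bottom_row_bounds (one_le_pq hy) j).2.2.1
  set M := cfMatrix (pq y) (j + 1)
  refine ⟨M 1 0, M 1 1 - M 0 0, -M 0 1, fun h0 => ?_, ?_⟩
  · rw [Prod.mk_eq_zero] at h0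
    omega
  push_cast
  linear_combination e

/-- Euler–Lagrange: an irrational `x ∈ [0,1]` is a quadratic irrational iff its
continued fraction expansion is eventually periodic. -/
theorem quadratic_irrational_iff_eventually_periodic :
    ∀ x : ℝ, x ∈ Set.Icc (0 : ℝ) 1 → Irrational x →
      ((∃ a b c : ℤ, a ≠ 0 ∧ (a : ℝ) * x ^ 2 + (b : ℝ) * x + (c : ℝ) = 0) ↔
        (∃ k : ℕ, 1 ≤ k ∧ ∃ N : ℕ, ∀ n : ℕ, N < n → pq x (n + k) = pq x n)) := by
  intro x hx01 hx
  have hx' : x ∈ unitIrrationals :=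
    ⟨⟨hx01.1.lt_of_ne hx.ne_zero.symm, hx01.2.lt_of_ne hx.ne_one⟩, hx⟩
  rw [← hx.isQuadraticRoot_iff]
  constructor
  · intro hq
    obtain ⟨m, k, hk, hper⟩ := exists_isPeriodicPt_of_isQuadraticRoot hx' hq
    exact ⟨k, hk, m, fun n hn => pq_add_eq_of_isPeriodicPt hper hn.le⟩
  · rintro ⟨k, hk, N, hpq⟩
    exact (isQuadraticRoot_of_isPeriodicPt (gaussMap_iterate_mem hx' _) hk
      (isPeriodicPt_of_pq_add_eq hx' hpq)).of_gaussMap_iterate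
end

section
/- For positive integers i, j, k, l, let D = (ijkl + ij + jk + kl + li)(ijkl + ij + jk + kl + li + 4) and x = (−(ijkl + ij + kl + li − jk) + √D)/(2(ijk + i + k)). Then x ∈ (0,1), x is irrational, and x satisfies x = 1/(i + 1/(j + 1/(k + 1/(l + x)))); hence the continued fraction expansion of x is periodic with period (i,j,k,l). -/
/-- `D = (ijkl + ij + jk + kl + li)(ijkl + ij + jk + kl + li + 4)`. -/
def D4 (i j k l : ℕ+) : ℕ :=
  ((i : ℕ) * j * k * l + i * j + j * k + k * l + l * i) *
    ((i : ℕ) * j * k * l + i * j + j * k + k * l + l * i + 4)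

/-- `x = (-(ijkl + ij + kl + li - jk) + √D)/(2(ijk + i + k))`. -/
noncomputable def x4 (i j k l : ℕ+) : ℝ :=
  (-(((i : ℕ) * j * k * l : ℝ) + (i : ℕ) * j + (k : ℕ) * l + (l : ℕ) * i -
      (j : ℕ) * k) + Real.sqrt (D4 i j k l)) / (2 * ((i : ℕ) * j * k + i + k))

open Set Function

lemma not_isSquare_mul_add_four {n : ℕ} (hn : 0 < n) : ¬ IsSquare (n * (n + 4)) := by
  rintro ⟨r, hr⟩
  have hlo : n + 1 < r := by nlinarith
  have hhi : r < n + 2 := by nlinarith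
  omega

section Quadratic

variable {A B C x : ℝ}

lemma quadratic_eq_zero_of_two_mul_add_eq_sqrt (hA : A ≠ 0) (hD : 0 ≤ B ^ 2 + 4 * A * C)
    (hx : 2 * A * x + B = √(B ^ 2 + 4 * A * C)) :
    A * x ^ 2 + B * x - C = 0 := by
  have hsq := congrArg (· ^ 2) hx
  simp only [Real.sq_sqrt hD] at hsq
  have : 4 * A * (A * x ^ 2 + B * x - C) = 0 := by linear_combination hsq
  simpa [hA] using this

lemma pos_of_two_mul_add_eq_sqrt (hA : 0 < A) (hC : 0 < C)
    (hx : 2 * A * x + B = √(B ^ 2 + 4 * A * C)) : 0 < x := by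
  have hB : B < √(B ^ 2 + 4 * A * C) :=
    lt_of_abs_lt (Real.lt_sqrt_of_sq_lt (by rw [sq_abs]; nlinarith [mul_pos hA hC]))
  nlinarith

end Quadratic

lemma eq_cf4_of_quadratic {a b c d x : ℝ} (ha : 0 < a) (hb : 0 < b) (hc : 0 < c) (hd : 0 < d)
    (hx : 0 < x)
    (h : (a * b * c + a + c) * x ^ 2 + (a * b * c * d + a * b + c * d + d * a - b * c) * x
      - (b * c * d + b + d) = 0) :
    x = 1 / (a + 1 / (b + 1 / (c + 1 / (d + x)))) := by
  have h3 : 0 < c * (d + x) + 1 := by positivity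
  have h2 : 0 < b * (c * (d + x) + 1) + (d + x) := by positivity
  have h1 : 0 < a * (b * (c * (d + x) + 1) + (d + x)) + (c * (d + x) + 1) := by positivity
  field_simp
  linear_combination h

section GaussMap

variable {m : ℕ} {y : ℝ}

lemma one_div_natCast_add_mem_Ioo (hm : 0 < m) (hy : 0 < y) : 1 / (m + y) ∈ Ioo (0 : ℝ) 1 := by
  have : (1 : ℝ) ≤ m := Nat.one_le_cast.mpr hm
  constructor
  · positivity
  · rw [div_lt_one (by positivity)]; linarith

lemma gaussMap_one_div_natCast_add (hy : y ∈ Ico 0 1) : gaussMap (1 / (m + y)) = y := by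
  rw [gaussMap, one_div_one_div, Int.fract_natCast_add, Int.fract_eq_self.mpr hy]

lemma pq_zero_one_div_natCast_add (hy : y ∈ Ico 0 1) : pq (1 / (m + y)) 0 = m := by
  rw [pq, iterate_zero_apply, one_div_one_div, Int.floor_natCast_add,
    Int.floor_eq_zero_iff.mpr hy, add_zero]

end GaussMap

lemma pq_succ (x : ℝ) (n : ℕ) : pq x (n + 1) = pq (gaussMap x) n := by
  rw [pq, pq, iterate_succ_apply]

lemma pq_mul_add_of_isPeriodicPt {x : ℝ} {p : ℕ} (h : IsPeriodicPt gaussMap p x) (n r : ℕ) :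
    pq x (p * n + r) = pq x r := by
  rw [pq, pq, add_comm, iterate_add_apply, (h.mul_const n).eq]

lemma mem_Ioo_isPeriodicPt_pq_of_eq_cf4 {a b c d : ℕ} (ha : 0 < a) (hb : 0 < b) (hc : 0 < c)
    (hd : 0 < d) {x : ℝ} (hx : 0 < x) (hfix : x = 1 / (a + 1 / (b + 1 / (c + 1 / (d + x))))) :
    x ∈ Ioo 0 1 ∧ IsPeriodicPt gaussMap 4 x ∧
      pq x 0 = a ∧ pq x 1 = b ∧ pq x 2 = c ∧ pq x 3 = d := by
  set y₃ := 1 / (d + x)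
  set y₂ := 1 / (c + y₃)
  set y₁ := 1 / (b + y₂)
  have m₃ : y₃ ∈ Ioo 0 1 := one_div_natCast_add_mem_Ioo hd hx
  have m₂ : y₂ ∈ Ioo 0 1 := one_div_natCast_add_mem_Ioo hc m₃.1
  have m₁ : y₁ ∈ Ioo 0 1 := one_div_natCast_add_mem_Ioo hb m₂.1
  have m₀ : x ∈ Ioo 0 1 := hfix ▸ one_div_natCast_add_mem_Ioo ha m₁.1
  have g₀ : gaussMap x = y₁ := hfix ▸ gaussMap_one_div_natCast_add (Ioo_subset_Ico_self m₁)
  have g₁ : gaussMap y₁ = y₂ := gaussMap_one_div_natCast_add (Ioo_subset_Ico_self m₂)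
  have g₂ : gaussMap y₂ = y₃ := gaussMap_one_div_natCast_add (Ioo_subset_Ico_self m₃)
  have g₃ : gaussMap y₃ = x := gaussMap_one_div_natCast_add (Ioo_subset_Ico_self m₀)
  refine ⟨m₀, ?_, ?_, ?_, ?_, ?_⟩
  · simp only [IsPeriodicPt, IsFixedPt, iterate_succ_apply, iterate_zero_apply,
      g₀, g₁, g₂, g₃]
  · rw [hfix]; exact pq_zero_one_div_natCast_add (Ioo_subset_Ico_self m₁)
  · rw [pq_succ, g₀]; exact pq_zero_one_div_natCast_add (Ioo_subset_Ico_self m₂)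
  · rw [pq_succ, pq_succ, g₀, g₁]; exact pq_zero_one_div_natCast_add (Ioo_subset_Ico_self m₃)
  · rw [pq_succ, pq_succ, pq_succ, g₀, g₁, g₂]
    exact pq_zero_one_div_natCast_add (Ioo_subset_Ico_self m₀)

lemma D4_cast (i j k l : ℕ+) :
    (D4 i j k l : ℝ) = ((i : ℝ) * j * k * l + i * j + k * l + l * i - j * k) ^ 2
      + 4 * ((i : ℝ) * j * k + i + k) * ((j : ℝ) * k * l + j + l) := by
  rw [D4]; push_cast; ring

lemma two_mul_mul_x4_add_eq_sqrt (i j k l : ℕ+) :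
    2 * ((i : ℝ) * j * k + i + k) * x4 i j k l
      + ((i : ℝ) * j * k * l + i * j + k * l + l * i - j * k) = √(D4 i j k l) := by
  rw [x4]
  field_simp
  ring

lemma irrational_x4 (i j k l : ℕ+) : Irrational (x4 i j k l) := by
  have hP : 0 < (i : ℕ) * j * k * l + i * j + j * k + k * l + l * i := by positivity
  have hs : Irrational √(D4 i j k l) :=
    irrational_sqrt_natCast_iff.mpr (not_isSquare_mul_add_four hP)
  rw [← two_mul_mul_x4_add_eq_sqrt] at hs
  refine .of_intCast_mul (2 * ((i : ℕ) * j * k + i + k)) (.of_add_intCast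
    ((i : ℕ) * j * k * l + i * j + k * l + l * i - j * k) ?_)
  push_cast
  exact hs

/-- For positive integers `i, j, k, l`, the number `x4 i j k l` is an irrational
in `(0,1)` satisfying `x = 1/(i + 1/(j + 1/(k + 1/(l + x))))`; hence its
continued fraction expansion is periodic with period `(i,j,k,l)`. -/
theorem cfe_period_four (i j k l : ℕ+) :
    x4 i j k l ∈ Set.Ioo (0 : ℝ) 1 ∧
    Irrational (x4 i j k l) ∧
    x4 i j k l =
      1 / ((i : ℕ) + 1 / ((j : ℕ) + 1 / ((k : ℕ) + 1 / ((l : ℕ) + x4 i j k l)))) ∧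
    ∀ n : ℕ, pq (x4 i j k l) (4 * n) = (i : ℕ) ∧
      pq (x4 i j k l) (4 * n + 1) = (j : ℕ) ∧
      pq (x4 i j k l) (4 * n + 2) = (k : ℕ) ∧
      pq (x4 i j k l) (4 * n + 3) = (l : ℕ) := by
  have hs := two_mul_mul_x4_add_eq_sqrt i j k l
  rw [D4_cast] at hs
  have hx0 := pos_of_two_mul_add_eq_sqrt (by positivity) (by positivity) hs
  have hfix := eq_cf4_of_quadratic (by positivity) (by positivity) (by positivity) (by positivity)
    hx0 (quadratic_eq_zero_of_two_mul_add_eq_sqrt (by positivity) (by positivity) hs)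
  obtain ⟨hx, hper, h₀, h₁, h₂, h₃⟩ :=
    mem_Ioo_isPeriodicPt_pq_of_eq_cf4 i.pos j.pos k.pos l.pos hx0 hfix
  refine ⟨hx, irrational_x4 i j k l, hfix, fun n => ⟨?_, ?_, ?_, ?_⟩⟩
  · exact (pq_mul_add_of_isPeriodicPt hper n 0).trans h₀
  · exact (pq_mul_add_of_isPeriodicPt hper n 1).trans h₁
  · exact (pq_mul_add_of_isPeriodicPt hper n 2).trans h₂
  · exact (pq_mul_add_of_isPeriodicPt hper n 3).trans h₃
end
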